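/- There is an even-odd partition of {z₁,…,z_{2ℓ}} (a set I with |I ∩ {2j−1, 2j}| = 1 for all j and ∑_{i∈I} z_i = ∑_{i∉I} z_i) if and only if the minimum of ∑_j c_j over choice vectors δ with ∑_j a_j ≤ Z equals Z, where c_j, a_j, Z are as in the reduction gadget. -/
import Mathlib

lemma pair_sum (ℓ : ℕ) (z : ℕ → ℤ) :
    ∑ j ∈ Finset.range ℓ, (z (2 * j) + z (2 * j + 1)) =
      ∑ i ∈ Finset.range (2 * ℓ), z i := by
  induction ℓ with
  | zero => simp
  | succ n ih =>
    rw [Finset.sum_range_succ, ih, Nat.mul_succ, Finset.sum_range_succ,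
      Finset.sum_range_succ]
    ring

lemma key (ℓ : ℕ) (z : ℕ → ℤ) (Z : ℤ)
    (hZ : 2 * Z = ∑ i ∈ Finset.range (2 * ℓ), z i) (δ : ℕ → ℤ) :
    (∑ j ∈ Finset.range ℓ, (δ j * z (2 * j) + (1 - δ j) * z (2 * j + 1))) +
    (∑ j ∈ Finset.range ℓ, (δ j * z (2 * j + 1) + (1 - δ j) * z (2 * j))) = 2 * Z := by
  rw [hZ, ← pair_sum ℓ z, ← Finset.sum_add_distrib]
  exact Finset.sum_congr rfl fun j _ => by ring

/-- An even-odd partition of `{z_0, …, z_{2ℓ−1}}` (choosing exactly one index from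
each pair `{2j, 2j+1}` so that the chosen elements sum to `Z = (∑ z)/2`) exists iff
the minimum of the cost `∑ c_j` over 0-1 choice vectors `δ` with weight `∑ a_j ≤ Z`
equals `Z`, with `c_j, a_j` as in the reduction gadget. -/
theorem stmt15 (ℓ : ℕ) (z : ℕ → ℤ) (hz : ∀ i < 2 * ℓ, 0 < z i)
    (Z : ℤ) (hZ : 2 * Z = ∑ i ∈ Finset.range (2 * ℓ), z i) :
    (∃ δ : ℕ → ℤ, (∀ j < ℓ, δ j = 0 ∨ δ j = 1) ∧
      (∑ j ∈ Finset.range ℓ, (δ j * z (2 * j) + (1 - δ j) * z (2 * j + 1))) = Z ∧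
      (∑ j ∈ Finset.range ℓ, (δ j * z (2 * j + 1) + (1 - δ j) * z (2 * j))) = Z) ↔
    IsLeast {C : ℤ | ∃ δ : ℕ → ℤ, (∀ j < ℓ, δ j = 0 ∨ δ j = 1) ∧
      (∑ j ∈ Finset.range ℓ, (δ j * z (2 * j) + (1 - δ j) * z (2 * j + 1))) ≤ Z ∧
      C = ∑ j ∈ Finset.range ℓ, (δ j * z (2 * j + 1) + (1 - δ j) * z (2 * j))} Z := by
  constructor
  · rintro ⟨δ, h01, hw, hc⟩
    constructor
    · exact ⟨δ, h01, le_of_eq hw, hc.symm⟩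
    · rintro C ⟨ε, h01', hw', hC⟩
      have := key ℓ z Z hZ ε
      omega
  · rintro ⟨⟨δ, h01, hw, hC⟩, _⟩
    have := key ℓ z Z hZ δ
    exact ⟨δ, h01, by omega, by omega⟩
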